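/- arXiv:2212.01987 — 3 statements merged into one kernel-verified Lean document; each statement's English description precedes it below -/
import Mathlib

section
/- Let 𝒱₁, …, 𝒱_λ be finite nonempty sets of non-negative row vectors in ℝ^λ, and let 𝒟 be the set of all λ×λ matrices whose i-th row belongs to 𝒱_i for each i. Let D_min ∈ 𝒟 be a matrix attaining the minimal spectral radius ρ_min over 𝒟, assume D_min is primitive, and let v_min be a positive right Perron–Frobenius eigenvector of D_min (so D_min v_min = ρ_min v_min). Then for every i and every d ∈ 𝒱_i, we have d·v_min ≥ ρ_min·[v_min]_i. -/
open Matrix Filter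

noncomputable def specRad {k : ℕ} (M : Matrix (Fin k) (Fin k) ℝ) : ℝ :=
  sSup ((fun z : ℂ => ‖z‖) '' spectrum ℂ (M.map Complex.ofReal))

theorem stmt3 {lam : ℕ} (V : Fin lam → Set (Fin lam → ℝ))
    (hfin : ∀ i, (V i).Finite) (hne : ∀ i, (V i).Nonempty)
    (hnonneg : ∀ i, ∀ d ∈ V i, ∀ j, 0 ≤ d j)
    (Dmin : Matrix (Fin lam) (Fin lam) ℝ)
    (hDmem : ∀ i, Dmin i ∈ V i)
    (hmin : ∀ D : Matrix (Fin lam) (Fin lam) ℝ,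
      (∀ i, D i ∈ V i) → specRad Dmin ≤ specRad D)
    (hprim : ∃ m : ℕ, ∀ i j, 0 < (Dmin ^ m) i j)
    (v : Fin lam → ℝ) (hv : ∀ i, 0 < v i)
    (heig : Dmin *ᵥ v = specRad Dmin • v) :
    ∀ i, ∀ d ∈ V i, specRad Dmin * v i ≤ ∑ j, d j * v j := by
  intro i d hd
  by_contra hcon
  push_neg at hcon
  set ρ := specRad Dmin with hρ
  -- the eigenvalue equation, coordinatewise
  have heig' : ∀ j, ∑ k, Dmin j k * v k = ρ * v j := by
    intro j
    have := congrFun heig j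
    simpa [Matrix.mulVec, dotProduct] using this
  have hρ0 : 0 ≤ ρ := by
    have h1 : (0:ℝ) ≤ ∑ k, Dmin i k * v k :=
      Finset.sum_nonneg fun k _ => mul_nonneg (hnonneg i _ (hDmem i) k) (hv k).le
    rw [heig' i] at h1
    nlinarith [hv i]
  -- the modified matrix D'
  set D' : Matrix (Fin lam) (Fin lam) ℝ := Function.update Dmin i d with hD'
  have hD'i : D' i = d := Function.update_self i d Dmin
  have hD'ne : ∀ j, j ≠ i → D' j = Dmin j := fun j hj => Function.update_of_ne hj d Dmin
  have hD'mem : ∀ j, D' j ∈ V j := by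
    intro j
    rcases eq_or_ne j i with rfl | hj
    · rw [hD'i]; exact hd
    · rw [hD'ne j hj]; exact hDmem j
  have hD'nn : ∀ j k, 0 ≤ D' j k := fun j k => hnonneg j _ (hD'mem j) k
  have hle : ρ ≤ specRad D' := hmin D' hD'mem
  -- row sums of D' against v
  have hDvall : ∀ j, ∑ k, D' j k * v k ≤ ρ * v j := by
    intro j
    rcases eq_or_ne j i with rfl | hj
    · rw [hD'i]; exact hcon.le
    · rw [hD'ne j hj, heig' j]
  have hDvi : ∑ k, D' i k * v k < ρ * v i := by rw [hD'i]; exact hcon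
  -- pick a peripheral eigenvalue of D'
  have : Nonempty (Fin lam) := ⟨i⟩
  set M' : Matrix (Fin lam) (Fin lam) ℂ := D'.map Complex.ofReal with hM'
  have hspec_ne : (spectrum ℂ M').Nonempty :=
    spectrum.nonempty_of_isAlgClosed_of_finiteDimensional ℂ M'
  have hfinAbs : ((fun z : ℂ => ‖z‖) '' spectrum ℂ M').Finite :=
    (Matrix.finite_spectrum M').image _
  have hneAbs : ((fun z : ℂ => ‖z‖) '' spectrum ℂ M').Nonempty :=
    hspec_ne.image _
  have hmem : specRad D' ∈ (fun z : ℂ => ‖z‖) '' spectrum ℂ M' := by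
    have := hneAbs.csSup_mem hfinAbs
    simpa [specRad, hM'] using this
  obtain ⟨μ, hμspec, hμabs⟩ := hmem
  have hρμ : ρ ≤ ‖μ‖ := le_of_le_of_eq hle hμabs.symm
  -- extract an eigenvector
  have hnu : ¬ IsUnit ((algebraMap ℂ (Matrix (Fin lam) (Fin lam) ℂ)) μ - M') :=
    spectrum.mem_iff.mp hμspec
  have hdet : ((algebraMap ℂ (Matrix (Fin lam) (Fin lam) ℂ)) μ - M').det = 0 := by
    by_contra hdet
    exact hnu ((Matrix.isUnit_iff_isUnit_det _).mpr (isUnit_iff_ne_zero.mpr hdet))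
  obtain ⟨x, hx0, hxe⟩ := (Matrix.exists_mulVec_eq_zero_iff).mpr hdet
  have hxeig : M' *ᵥ x = μ • x := by
    have h1 : ((algebraMap ℂ (Matrix (Fin lam) (Fin lam) ℂ)) μ) *ᵥ x - M' *ᵥ x = 0 := by
      rw [← Matrix.sub_mulVec]; exact hxe
    have h2 : ((algebraMap ℂ (Matrix (Fin lam) (Fin lam) ℂ)) μ) *ᵥ x = μ • x := by
      rw [Algebra.algebraMap_eq_smul_one, Matrix.smul_mulVec, Matrix.one_mulVec]
    rw [h2] at h1
    exact (sub_eq_zero.mp h1).symm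
  -- absolute values of the eigenvector
  set y : Fin lam → ℝ := fun j => ‖x j‖ with hy
  have hynn : ∀ j, 0 ≤ y j := fun j => norm_nonneg _
  have heigabs : ∀ j, ‖μ‖ * y j ≤ ∑ k, D' j k * y k := by
    intro j
    have h1 : (μ • x) j = ∑ k, (D' j k : ℂ) * x k := by
      rw [← hxeig]
      simp [Matrix.mulVec, dotProduct, hM', Matrix.map_apply]
    have h2 : ‖μ‖ * y j = ‖∑ k, (D' j k : ℂ) * x k‖ := by
      rw [← h1]; simp [hy, Pi.smul_apply, smul_eq_mul, norm_mul]
    rw [h2]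
    calc ‖∑ k, (D' j k : ℂ) * x k‖
        ≤ ∑ k, ‖(D' j k : ℂ) * x k‖ := norm_sum_le _ _
      _ = ∑ k, D' j k * y k := by
          apply Finset.sum_congr rfl
          intro k _
          rw [norm_mul, Complex.norm_real, Real.norm_eq_abs, abs_of_nonneg (hD'nn j k)]
  -- the argmax of y j / v j
  obtain ⟨j0, -, hj0max⟩ := Finset.exists_max_image Finset.univ
    (fun j => y j / v j) ⟨i, Finset.mem_univ i⟩
  set s : ℝ := y j0 / v j0 with hsdef
  have hle_sv : ∀ k, y k ≤ s * v k := by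
    intro k
    have := hj0max k (Finset.mem_univ k)
    calc y k = (y k / v k) * v k := (div_mul_cancel₀ (y k) (ne_of_gt (hv k))).symm
      _ ≤ s * v k := mul_le_mul_of_nonneg_right this (hv k).le
  have hyj0 : y j0 = s * v j0 := by
    rw [hsdef, div_mul_eq_mul_div, mul_div_assoc,
      div_self (ne_of_gt (hv j0)), mul_one]
  have hs_pos : 0 < s := by
    obtain ⟨k, hk⟩ := Function.ne_iff.mp hx0
    have hyk : 0 < y k := by
      simpa [hy] using (norm_pos_iff.mpr hk)
    have h1 : 0 < y k / v k := div_pos hyk (hv k)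
    exact lt_of_lt_of_le h1 (hj0max k (Finset.mem_univ k))
  -- the key equality-case analysis
  have hkey : ∀ j, y j = s * v j →
      (j ≠ i ∧ ∀ k, 0 < D' j k → y k = s * v k) := by
    intro j hj
    have c1 : ρ * (s * v j) ≤ ‖μ‖ * y j := by
      rw [hj]
      exact mul_le_mul_of_nonneg_right hρμ (mul_nonneg hs_pos.le (hv j).le)
    have c2 : ‖μ‖ * y j ≤ ∑ k, D' j k * y k := heigabs j
    have c3 : ∑ k, D' j k * y k ≤ ∑ k, D' j k * (s * v k) :=
      Finset.sum_le_sum fun k _ => mul_le_mul_of_nonneg_left (hle_sv k) (hD'nn j k)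
    have c3' : ∑ k, D' j k * (s * v k) = s * ∑ k, D' j k * v k := by
      rw [Finset.mul_sum]
      exact Finset.sum_congr rfl fun k _ => by ring
    have c4 : s * ∑ k, D' j k * v k ≤ s * (ρ * v j) :=
      mul_le_mul_of_nonneg_left (hDvall j) hs_pos.le
    have hends : ρ * (s * v j) = s * (ρ * v j) := by ring
    -- equality of row sum
    have hrow : ∑ k, D' j k * v k = ρ * v j := by
      have h1 : s * ∑ k, D' j k * v k = s * (ρ * v j) := by linarith
      exact mul_left_cancel₀ (ne_of_gt hs_pos) h1
    have hji : j ≠ i := by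
      intro hji
      rw [hji] at hrow
      exact absurd hrow (ne_of_lt hDvi)
    refine ⟨hji, ?_⟩
    -- equality of the two sums
    have hsum : ∑ k, D' j k * (s * v k) = ∑ k, D' j k * y k := by linarith
    have hzero : ∑ k, D' j k * (s * v k - y k) = 0 := by
      rw [Finset.sum_congr rfl fun k _ => (mul_sub (D' j k) (s * v k) (y k))]
      rw [Finset.sum_sub_distrib, hsum]
      ring
    have hterm := (Finset.sum_eq_zero_iff_of_nonneg
      (fun k _ => mul_nonneg (hD'nn j k) (by linarith [hle_sv k]))).mp hzero
    intro k hk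
    have := hterm k (Finset.mem_univ k)
    have h2 : s * v k - y k = 0 := by
      rcases mul_eq_zero.mp this with h | h
      · exact absurd h (ne_of_gt hk)
      · exact h
    linarith
  -- nonnegativity of powers
  have hpownn : ∀ n : ℕ, ∀ j k, 0 ≤ (Dmin ^ n) j k := by
    intro n
    induction n with
    | zero =>
      intro j k
      simp only [pow_zero, Matrix.one_apply]
      split <;> norm_num
    | succ n ih =>
      intro j k
      rw [pow_succ', Matrix.mul_apply]
      exact Finset.sum_nonneg fun l _ =>
        mul_nonneg (hnonneg j _ (hDmem j) l) (ih l k)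
  -- closure under positive entries of powers
  have hclosed : ∀ n : ℕ, ∀ j, y j = s * v j →
      ∀ k, 0 < (Dmin ^ n) j k → y k = s * v k := by
    intro n
    induction n with
    | zero =>
      intro j hj k hk
      simp only [pow_zero, Matrix.one_apply] at hk
      by_cases h : j = k
      · rw [← h]; exact hj
      · simp [h] at hk
    | succ n ih =>
      intro j hj k hk
      rw [pow_succ', Matrix.mul_apply] at hk
      obtain ⟨l, -, hl⟩ := Finset.exists_lt_of_sum_lt (by
        simpa using hk : ∑ l, (0:ℝ) < ∑ l, Dmin j l * (Dmin ^ n) l k)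
      have hl' : 0 < Dmin j l * (Dmin ^ n) l k := hl
      have hfac : 0 < Dmin j l ∧ 0 < (Dmin ^ n) l k := by
        rcases mul_pos_iff.mp hl' with h | h
        · exact h
        · exact absurd h.1 (not_lt.mpr (hnonneg j _ (hDmem j) l))
      obtain ⟨hji, hstep⟩ := hkey j hj
      have hyl : y l = s * v l := by
        apply hstep l
        rw [hD'ne j hji]
        exact hfac.1
      exact ih l hyl k hfac.2
  obtain ⟨m, hm⟩ := hprim
  have hyi : y i = s * v i := hclosed m j0 hyj0 i (hm j0 i)
  exact (hkey i hyi).1 rfl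
end

section
/- There exist 2×2 non-negative integer matrices D₁ and D₂ with equal spectral radius ρ such that ρ(D₁D₂) < ρ². Concretely, for D₁ = [[1,1],[1,2]] and D₂ = [[2,1],[1,1]], one has ρ(D₁) = ρ(D₂) = (3+√5)/2 and ρ(D₁D₂) = 3 + 2√2 < ((3+√5)/2)². -/
open Matrix Filter

lemma spec2 (a b c d r₁ r₂ : ℝ) (h1 : r₁ + r₂ = a + d) (h2 : r₁ * r₂ = a * d - b * c) :
    spectrum ℂ ((!![a, b; c, d]).map Complex.ofReal) = {(r₁ : ℂ), (r₂ : ℂ)} := by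
  have hmap : (!![a, b; c, d]).map Complex.ofReal = !![(a : ℂ), b; c, d] := by
    ext i j; fin_cases i <;> fin_cases j <;> simp [Matrix.map_apply]
  ext z
  rw [hmap, spectrum.mem_iff, Algebra.algebraMap_eq_smul_one,
    Matrix.isUnit_iff_isUnit_det, isUnit_iff_ne_zero, not_not]
  have hdet : ((z • (1 : Matrix (Fin 2) (Fin 2) ℂ) - !![(a : ℂ), b; c, d])).det
      = (z - r₁) * (z - r₂) := by
    have h1' : (r₁ : ℂ) + r₂ = a + d := by exact_mod_cast congrArg Complex.ofReal h1
    have h2' : (r₁ : ℂ) * r₂ = a * d - b * c := by exact_mod_cast congrArg Complex.ofReal h2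
    simp [Matrix.det_fin_two, Matrix.smul_apply, Matrix.one_apply]
    linear_combination z * h1' - h2'
  rw [hdet]
  simp [mul_eq_zero, sub_eq_zero]

lemma abs_image (r₁ r₂ : ℝ) (h1 : 0 ≤ r₁) (h2 : 0 ≤ r₂) :
    (fun z : ℂ => ‖z‖) '' {(r₁ : ℂ), (r₂ : ℂ)} = {r₁, r₂} := by
  rw [Set.image_pair]
  simp [Complex.norm_real, Real.norm_eq_abs, abs_of_nonneg h1, abs_of_nonneg h2]

lemma specRad2 (a b c d r₁ r₂ : ℝ) (h1 : r₁ + r₂ = a + d) (h2 : r₁ * r₂ = a * d - b * c)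
    (h3 : 0 ≤ r₂) (h4 : r₂ ≤ r₁) : specRad !![a, b; c, d] = r₁ := by
  unfold specRad
  rw [spec2 a b c d r₁ r₂ h1 h2, abs_image r₁ r₂ (h3.trans h4) h3, csSup_pair,
    max_eq_left h4]

theorem stmt5 :
    specRad !![(1:ℝ), 1; 1, 2] = (3 + Real.sqrt 5) / 2 ∧
    specRad !![(2:ℝ), 1; 1, 1] = (3 + Real.sqrt 5) / 2 ∧
    specRad (!![(1:ℝ), 1; 1, 2] * !![(2:ℝ), 1; 1, 1]) = 3 + 2 * Real.sqrt 2 ∧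
    3 + 2 * Real.sqrt 2 < ((3 + Real.sqrt 5) / 2) ^ 2 := by
  have s5 : Real.sqrt 5 ^ 2 = 5 := Real.sq_sqrt (by norm_num)
  have s5n : 0 ≤ Real.sqrt 5 := Real.sqrt_nonneg 5
  have s5le : Real.sqrt 5 ≤ 3 := by nlinarith [s5]
  have s2 : Real.sqrt 2 ^ 2 = 2 := Real.sq_sqrt (by norm_num)
  have s2n : 0 ≤ Real.sqrt 2 := Real.sqrt_nonneg 2
  have hprod : !![(1:ℝ), 1; 1, 2] * !![(2:ℝ), 1; 1, 1] = !![(3:ℝ), 2; 4, 3] := by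
    ext i j; fin_cases i <;> fin_cases j <;>
      norm_num [Matrix.mul_apply, Fin.sum_univ_two]
  have hkey : 4 * Real.sqrt 2 < 3 * Real.sqrt 5 := by
    by_contra h
    push_neg at h
    nlinarith [h, s5, s2, s5n, s2n]
  refine ⟨?_, ?_, ?_, ?_⟩
  · exact specRad2 1 1 1 2 ((3 + Real.sqrt 5) / 2) ((3 - Real.sqrt 5) / 2)
      (by ring) (by nlinarith [s5]) (by nlinarith [s5le]) (by nlinarith [s5n])
  · exact specRad2 2 1 1 1 ((3 + Real.sqrt 5) / 2) ((3 - Real.sqrt 5) / 2)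
      (by ring) (by nlinarith [s5]) (by nlinarith [s5le]) (by nlinarith [s5n])
  · rw [hprod]
    exact specRad2 3 2 4 3 (3 + 2 * Real.sqrt 2) (3 - 2 * Real.sqrt 2)
      (by ring) (by nlinarith [s2]) (by nlinarith [s2, s2n]) (by nlinarith [s2n])
  · nlinarith [hkey, s5, s5n, s2n]
end

section
/- Among the four matrices [[2,1],[1,4]], [[2,1],[4,1]], [[0,2],[1,4]], [[0,2],[4,1]], the matrix [[0,2],[4,1]] has the strictly smallest spectral radius, equal to (1 + √33)/2. -/
open Matrix Filter

lemma spec_two (m : Matrix (Fin 2) (Fin 2) ℝ) (r₁ r₂ : ℝ)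
    (h : ∀ z : ℂ, (z - (r₁:ℂ)) * (z - (r₂:ℂ))
        = (z - (m 0 0 : ℝ)) * (z - (m 1 1 : ℝ)) - (m 0 1 : ℝ) * (m 1 0 : ℝ)) :
    spectrum ℂ (m.map Complex.ofReal) = {(r₁:ℂ), (r₂:ℂ)} := by
  ext z
  rw [spectrum.mem_iff, Matrix.isUnit_iff_isUnit_det, isUnit_iff_ne_zero, not_not]
  have hdet : ((algebraMap ℂ (Matrix (Fin 2) (Fin 2) ℂ)) z - m.map Complex.ofReal).det
      = (z - (m 0 0 : ℝ)) * (z - (m 1 1 : ℝ)) - (m 0 1 : ℝ) * (m 1 0 : ℝ) := by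
    rw [Matrix.det_fin_two]
    simp [Matrix.algebraMap_eq_diagonal, Matrix.diagonal, Matrix.map_apply]
  rw [hdet, ← h, mul_eq_zero, sub_eq_zero, sub_eq_zero]
  simp [Set.mem_insert_iff]

lemma specRad_two (m : Matrix (Fin 2) (Fin 2) ℝ) (r₁ r₂ : ℝ)
    (h : ∀ z : ℂ, (z - (r₁:ℂ)) * (z - (r₂:ℂ))
        = (z - (m 0 0 : ℝ)) * (z - (m 1 1 : ℝ)) - (m 0 1 : ℝ) * (m 1 0 : ℝ)) :
    specRad m = max |r₁| |r₂| := by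
  unfold specRad
  rw [spec_two m r₁ r₂ h, Set.image_pair]
  simp only [Complex.norm_real, Real.norm_eq_abs]
  exact csSup_pair _ _

theorem stmt8 :
    specRad !![(0:ℝ), 2; 4, 1] = (1 + Real.sqrt 33) / 2 ∧
    specRad !![(0:ℝ), 2; 4, 1] < specRad !![(2:ℝ), 1; 1, 4] ∧
    specRad !![(0:ℝ), 2; 4, 1] < specRad !![(2:ℝ), 1; 4, 1] ∧
    specRad !![(0:ℝ), 2; 4, 1] < specRad !![(0:ℝ), 2; 1, 4] := by
  have sq33 : Real.sqrt 33 ^ 2 = 33 := Real.sq_sqrt (by norm_num)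
  have sq2 : Real.sqrt 2 ^ 2 = 2 := Real.sq_sqrt (by norm_num)
  have sq17 : Real.sqrt 17 ^ 2 = 17 := Real.sq_sqrt (by norm_num)
  have sq6 : Real.sqrt 6 ^ 2 = 6 := Real.sq_sqrt (by norm_num)
  have h33 : ((Real.sqrt 33 : ℝ) : ℂ) ^ 2 = 33 := by
    rw [← Complex.ofReal_pow, sq33]; norm_num
  have h2 : ((Real.sqrt 2 : ℝ) : ℂ) ^ 2 = 2 := by
    rw [← Complex.ofReal_pow, sq2]; norm_num
  have h17 : ((Real.sqrt 17 : ℝ) : ℂ) ^ 2 = 17 := by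
    rw [← Complex.ofReal_pow, sq17]; norm_num
  have h6 : ((Real.sqrt 6 : ℝ) : ℂ) ^ 2 = 6 := by
    rw [← Complex.ofReal_pow, sq6]; norm_num
  have b33l : (5 : ℝ) < Real.sqrt 33 := by nlinarith [Real.sqrt_nonneg 33]
  have b33u : Real.sqrt 33 < 5.8 := by nlinarith [Real.sqrt_nonneg 33]
  have b2 : (1.4 : ℝ) < Real.sqrt 2 := by nlinarith [Real.sqrt_nonneg 2]
  have b2u : Real.sqrt 2 < 1.5 := by nlinarith [Real.sqrt_nonneg 2]
  have b17 : (4.1 : ℝ) < Real.sqrt 17 := by nlinarith [Real.sqrt_nonneg 17]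
  have b6 : (2.4 : ℝ) < Real.sqrt 6 := by nlinarith [Real.sqrt_nonneg 6]
  have hA : specRad !![(0:ℝ), 2; 4, 1] = (1 + Real.sqrt 33) / 2 := by
    rw [specRad_two _ ((1 + Real.sqrt 33)/2) ((1 - Real.sqrt 33)/2) ?_]
    · rw [abs_of_nonneg (by linarith), abs_of_nonpos (by linarith), max_eq_left (by linarith)]
    · intro z
      simp
      linear_combination (-(1:ℂ)/4) * h33
  have hB : specRad !![(2:ℝ), 1; 1, 4] = 3 + Real.sqrt 2 := by
    rw [specRad_two _ (3 + Real.sqrt 2) (3 - Real.sqrt 2) ?_]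
    · rw [abs_of_nonneg (by linarith), abs_of_nonneg (by linarith),
        max_eq_left (by linarith)]
    · intro z
      simp
      linear_combination (-(1:ℂ)) * h2
  have hC : specRad !![(2:ℝ), 1; 4, 1] = (3 + Real.sqrt 17) / 2 := by
    rw [specRad_two _ ((3 + Real.sqrt 17)/2) ((3 - Real.sqrt 17)/2) ?_]
    · rw [abs_of_nonneg (by linarith), abs_of_nonpos (by linarith), max_eq_left (by linarith)]
    · intro z
      simp
      linear_combination (-(1:ℂ)/4) * h17
  have hD : specRad !![(0:ℝ), 2; 1, 4] = 2 + Real.sqrt 6 := by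
    rw [specRad_two _ (2 + Real.sqrt 6) (2 - Real.sqrt 6) ?_]
    · rw [abs_of_nonneg (by linarith), abs_of_nonpos (by linarith), max_eq_left (by linarith)]
    · intro z
      simp
      linear_combination (-(1:ℂ)) * h6
  refine ⟨hA, ?_, ?_, ?_⟩
  · rw [hA, hB]; linarith
  · rw [hA, hC]; linarith
  · rw [hA, hD]; linarith
end
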